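/- arXiv:math/9805024 — 2 statements merged into one kernel-verified Lean document; each statement's English description precedes it below -/
import Mathlib

section
/- Let k ≥ 1 and ε ∈ {1,−1}. Let F ∈ ℝ^{(2k+1)×(2k+1)} have entries F_{i,2k+2−i} = (−1)^{i+1}ε and 0 elsewhere, let n = 2k+2 and K = diag(F, 1) ∈ ℝ^{n×n}, and let S ∈ ℝ^{n×n} be the matrix with S_{i,i+1} = 1 for 1 ≤ i ≤ 2k and all other entries 0. For a = (a_1,…,a_k) ∈ ℝ^k and b ∈ ℝ set X(a,b) = Σ_{j=1}^{k} a_j S^{2j−1} + b(E_{1,2k+2} − ε E_{2k+2,2k+1}), an element of o(K). For λ, μ ∈ ℝ let M_{λ,μ} = {E(X(a,b), α e_1 + λb e_2 + (λ a_1 + μ b) e_{2k+2}) : a ∈ ℝ^k, b ∈ ℝ, α ∈ ℝ} ⊆ e(K). Then every maximal abelian subalgebra M of e(K) satisfying {X : E(X,ξ) ∈ M for some ξ} = {X(a,b) : a ∈ ℝ^k, b ∈ ℝ} and M ∩ T(n) = ℝ·E(0,e_1) is conjugate, under conjugation by an element of the group E(K)-grp, to M_{λ,μ} for some (λ,μ)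 ∈ {(0,0), (0,1), (0,−1)} ∪ {(1,μ) : μ ∈ ℝ} (the value (0,0) giving the splitting case). -/
/-!
Let `S = X(e₁, 0)` and `B = X(0, 1)`, and pick `E(S, u), E(B, v) ∈ M`. Commuting with these two
elements determines the translation part `ξ` of every `E(X(a,b), ξ) ∈ M` modulo `e₁`: from
`Sξ = X(a,b)u`, `Bξ = X(a,b)v` and `Sv = Bu` one reads off
`ξ ≡ X(a,b)Sᵀu + λb e₂ + (λa₁ + μb) e_{2k+2}` with `λ = v₂` and `μ = v_{2k+2} + ε u_{2k}`
(`ε ≠ 0` gives `u_{2k+1} = 0`). So the translation by `-Sᵀu` conjugates `M_{λ,μ}` onto `M`.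
The diagonal isometry `diag(r^k, r^{k-1}, …, r^{-k}, 1)` of `K` rescales `S` by `r` and `B` by
`r^k`, hence carries `M_{λr, μr^k}` onto `M_{λ,μ}`; `r = λ⁻¹`, or `r = |μ|^{-1/k}` when `λ = 0`,
normalises the parameters. Indices here are 1-based as in the paper; `Fin` indices are 0-based.
-/

open Matrix

/-- `o(K)`: real matrices `X` with `XK + KXᵀ = 0`. -/
def oK {n : ℕ} (K : Matrix (Fin n) (Fin n) ℝ) : Set (Matrix (Fin n) (Fin n) ℝ) :=
  {X | X * K + K * Xᵀ = 0}

/-- The `(n+1) × (n+1)` matrix `E(X, a)` with block form `[[X, a], [0, 0]]`. -/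
def Emat {n : ℕ} (X : Matrix (Fin n) (Fin n) ℝ) (a : Fin n → ℝ) :
    Matrix (Fin (n + 1)) (Fin (n + 1)) ℝ :=
  Matrix.of fun i j =>
    if hi : i.val < n then
      if hj : j.val < n then X ⟨i.val, hi⟩ ⟨j.val, hj⟩ else a ⟨i.val, hi⟩
    else 0

/-- The Lie algebra `e(K)`, as a set of `(n+1) × (n+1)` matrices. -/
def eK {n : ℕ} (K : Matrix (Fin n) (Fin n) ℝ) :
    Set (Matrix (Fin (n + 1)) (Fin (n + 1)) ℝ) :=
  {m | ∃ X ∈ oK K, ∃ a : Fin n → ℝ, m = Emat X a}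

/-- `M` is a maximal abelian subalgebra of the matrix Lie algebra (set) `L`:
it is a linear subspace contained in `L`, its elements pairwise commute, and
every element of `L` commuting with all of `M` belongs to `M`. -/
def IsMASA {κ : Type*} [Fintype κ] (L M : Set (Matrix κ κ ℝ)) : Prop :=
  M ⊆ L ∧
  (∀ X ∈ M, ∀ Y ∈ M, X * Y = Y * X) ∧
  (0 : Matrix κ κ ℝ) ∈ M ∧
  (∀ X ∈ M, ∀ Y ∈ M, X + Y ∈ M) ∧
  (∀ (c : ℝ), ∀ X ∈ M, c • X ∈ M) ∧
  (∀ Y ∈ L, (∀ X ∈ M, Y * X = X * Y) → Y ∈ M)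

/-- The group element of `E(K)` with block form `[[G, a], [0, 1]]`. -/
def Ggrp {n : ℕ} (G : Matrix (Fin n) (Fin n) ℝ) (a : Fin n → ℝ) :
    Matrix (Fin (n + 1)) (Fin (n + 1)) ℝ :=
  Matrix.of fun i j =>
    if hi : i.val < n then
      if hj : j.val < n then G ⟨i.val, hi⟩ ⟨j.val, hj⟩ else a ⟨i.val, hi⟩
    else
      if j.val < n then 0 else 1

/-- `M` is conjugate to `S` by an element `[[G, a], [0, 1]]` of the group `E(K)`. -/
def ConjTo {n : ℕ} (K : Matrix (Fin n) (Fin n) ℝ)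
    (M S : Set (Matrix (Fin (n + 1)) (Fin (n + 1)) ℝ)) : Prop :=
  ∃ (G : Matrix (Fin n) (Fin n) ℝ) (a : Fin n → ℝ),
    G * K * Gᵀ = K ∧
    M = (fun m => Ggrp G a * m * (Ggrp G a)⁻¹) '' S

/-- The metric `K = diag(F, 1)`, `F` the antidiagonal metric of size `2k+1`. -/
def K2 (k : ℕ) (ε : ℝ) : Matrix (Fin (2 * k + 2)) (Fin (2 * k + 2)) ℝ :=
  Matrix.of fun i j =>
    if i.val < 2 * k + 1 ∧ j.val < 2 * k + 1 then
      (if i.val + j.val = 2 * k then (-1) ^ i.val * ε else 0)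
    else if i.val = 2 * k + 1 ∧ j.val = 2 * k + 1 then 1 else 0

/-- The truncated shift matrix `S`, `S_{i,i+1} = 1` for `1 ≤ i ≤ 2k` (1-indexed). -/
def S2 (k : ℕ) : Matrix (Fin (2 * k + 2)) (Fin (2 * k + 2)) ℝ :=
  Matrix.of fun i j => if j.val = i.val + 1 ∧ j.val ≤ 2 * k then 1 else 0

/-- The matrix `E_{1,2k+2} - ε E_{2k+2,2k+1}` (1-indexed). -/
def B2 (k : ℕ) (ε : ℝ) : Matrix (Fin (2 * k + 2)) (Fin (2 * k + 2)) ℝ :=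
  Matrix.of fun i j =>
    if i.val = 0 ∧ j.val = 2 * k + 1 then 1
    else if i.val = 2 * k + 1 ∧ j.val = 2 * k then -ε else 0

/-- `X(a,b) = Σⱼ aⱼ S^{2j-1} + b(E_{1,2k+2} - ε E_{2k+2,2k+1})`. -/
def X2 (k : ℕ) (ε : ℝ) (a : Fin k → ℝ) (b : ℝ) :
    Matrix (Fin (2 * k + 2)) (Fin (2 * k + 2)) ℝ :=
  (∑ j : Fin k, a j • S2 k ^ (2 * j.val + 1)) + b • B2 k ε

/-- The (possibly nonsplitting) MASA `M_{λ,μ}` with translation parts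
`α e₁ + λb e₂ + (λa₁ + μb) e_{2k+2}`. -/
def Mlm (k : ℕ) (hk : 0 < k) (ε lam mu : ℝ) :
    Set (Matrix (Fin (2 * k + 2 + 1)) (Fin (2 * k + 2 + 1)) ℝ) :=
  {m | ∃ (a : Fin k → ℝ) (b α : ℝ),
    m = Emat (X2 k ε a b)
      (fun i => if i.val = 0 then α else if i.val = 1 then lam * b
        else if i.val = 2 * k + 1 then lam * a ⟨0, hk⟩ + mu * b else 0)}

section AffineBlock

variable {n : ℕ}

def affineBlock (X : Matrix (Fin n) (Fin n) ℝ) (ξ : Fin n → ℝ) (d : ℝ) :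
    Matrix (Fin (n + 1)) (Fin (n + 1)) ℝ :=
  Matrix.of fun i j =>
    if hi : i.val < n then
      if hj : j.val < n then X ⟨i.val, hi⟩ ⟨j.val, hj⟩ else ξ ⟨i.val, hi⟩
    else
      if j.val < n then 0 else d

lemma Emat_eq_affineBlock (X : Matrix (Fin n) (Fin n) ℝ) (ξ : Fin n → ℝ) :
    Emat X ξ = affineBlock X ξ 0 := by
  ext i j
  simp [Emat, affineBlock]

lemma Ggrp_eq_affineBlock (G : Matrix (Fin n) (Fin n) ℝ) (c : Fin n → ℝ) :
    Ggrp G c = affineBlock G c 1 :=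
  rfl

lemma affineBlock_mul (X Y : Matrix (Fin n) (Fin n) ℝ) (ξ η : Fin n → ℝ) (d e : ℝ) :
    affineBlock X ξ d * affineBlock Y η e = affineBlock (X * Y) (X *ᵥ η + e • ξ) (d * e) := by
  ext i j
  simp only [mul_apply, affineBlock, of_apply, Fin.sum_univ_castSucc, Fin.val_castSucc,
    Fin.is_lt, dite_true, Fin.val_last, lt_irrefl, dite_false, if_false]
  rcases Nat.lt_or_ge i.val n with hi | hi
  · rcases Nat.lt_or_ge j.val n with hj | hj
    · simp [hi, hj]
    · simp [hi, Nat.not_lt.2 hj, mulVec, dotProduct, mul_comm]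
  · rcases Nat.lt_or_ge j.val n with hj | hj
    · simp [Nat.not_lt.2 hi, hj]
    · simp [Nat.not_lt.2 hi, Nat.not_lt.2 hj]

lemma affineBlock_one : affineBlock (1 : Matrix (Fin n) (Fin n) ℝ) 0 1 = 1 := by
  ext i j
  rcases Nat.lt_or_ge i.val n with hi | hi <;> rcases Nat.lt_or_ge j.val n with hj | hj
  · simp [affineBlock, hi, hj, one_apply, Fin.ext_iff]
  · simp [affineBlock, hi, Nat.not_lt.2 hj, one_apply, Fin.ext_iff]; omega
  · simp [affineBlock, Nat.not_lt.2 hi, hj, one_apply, Fin.ext_iff]; omega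
  · simp [affineBlock, Nat.not_lt.2 hi, Nat.not_lt.2 hj, one_apply, Fin.ext_iff]; omega

lemma Emat_mul (X Y : Matrix (Fin n) (Fin n) ℝ) (ξ η : Fin n → ℝ) :
    Emat X ξ * Emat Y η = Emat (X * Y) (X *ᵥ η) := by
  simp [Emat_eq_affineBlock, affineBlock_mul]

lemma Ggrp_mul_Ggrp (G H : Matrix (Fin n) (Fin n) ℝ) (c d : Fin n → ℝ) :
    Ggrp G c * Ggrp H d = Ggrp (G * H) (G *ᵥ d + c) := by
  simp [Ggrp_eq_affineBlock, affineBlock_mul]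

lemma Ggrp_inv {G H : Matrix (Fin n) (Fin n) ℝ} (hGH : G * H = 1) (c : Fin n → ℝ) :
    (Ggrp G c)⁻¹ = Ggrp H (-(H *ᵥ c)) := by
  apply inv_eq_right_inv
  rw [Ggrp_mul_Ggrp, hGH, mulVec_neg, mulVec_mulVec, hGH, one_mulVec, neg_add_cancel,
    Ggrp_eq_affineBlock, affineBlock_one]

lemma Ggrp_conj_Emat {G H : Matrix (Fin n) (Fin n) ℝ} (hGH : G * H = 1) (c : Fin n → ℝ)
    (X : Matrix (Fin n) (Fin n) ℝ) (ξ : Fin n → ℝ) :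
    Ggrp G c * Emat X ξ * (Ggrp G c)⁻¹ = Emat (G * X * H) (G *ᵥ ξ - (G * X * H) *ᵥ c) := by
  rw [Ggrp_inv hGH, Emat_eq_affineBlock, Emat_eq_affineBlock, Ggrp_eq_affineBlock,
    Ggrp_eq_affineBlock, affineBlock_mul, affineBlock_mul]
  congr 1
  · rw [mulVec_neg, mulVec_mulVec, zero_smul, add_zero, neg_add_eq_sub, one_smul]
  · ring

lemma Ggrp_one_conj_Emat (c : Fin n → ℝ) (X : Matrix (Fin n) (Fin n) ℝ) (ξ : Fin n → ℝ) :
    Ggrp 1 (-c) * Emat X ξ * (Ggrp 1 (-c))⁻¹ = Emat X (ξ + X *ᵥ c) := by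
  rw [Ggrp_conj_Emat (Matrix.one_mul 1)]
  simp [sub_eq_add_neg, mulVec_neg]

lemma Emat_injective2 : Function.Injective2 (@Emat n) := by
  intro X Y ξ η h
  constructor
  · ext i j
    simpa [Emat] using congrFun (congrFun h i.castSucc) j.castSucc
  · ext i
    simpa [Emat] using congrFun (congrFun h i.castSucc) (Fin.last n)

lemma Emat_add (X Y : Matrix (Fin n) (Fin n) ℝ) (ξ η : Fin n → ℝ) :
    Emat X ξ + Emat Y η = Emat (X + Y) (ξ + η) := by
  ext i j
  simp only [Emat, Matrix.add_apply, of_apply, Pi.add_apply]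
  split_ifs <;> simp

lemma mulVec_eq_of_Emat_commute {X Y : Matrix (Fin n) (Fin n) ℝ} {ξ η : Fin n → ℝ}
    (h : Emat X ξ * Emat Y η = Emat Y η * Emat X ξ) : X *ᵥ η = Y *ᵥ ξ := by
  rw [Emat_mul, Emat_mul] at h
  exact (Emat_injective2 h).2

theorem ConjTo.trans {K : Matrix (Fin n) (Fin n) ℝ}
    {M₁ M₂ M₃ : Set (Matrix (Fin (n + 1)) (Fin (n + 1)) ℝ)}
    (h₁₂ : ConjTo K M₁ M₂) (h₂₃ : ConjTo K M₂ M₃) : ConjTo K M₁ M₃ := by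
  obtain ⟨G₁, c₁, hG₁, rfl⟩ := h₁₂
  obtain ⟨G₂, c₂, hG₂, rfl⟩ := h₂₃
  refine ⟨G₁ * G₂, G₁ *ᵥ c₂ + c₁, ?_, ?_⟩
  · calc G₁ * G₂ * K * (G₁ * G₂)ᵀ = G₁ * (G₂ * K * G₂ᵀ) * G₁ᵀ := by
          simp only [transpose_mul, Matrix.mul_assoc]
      _ = K := by rw [hG₂, hG₁]
  · rw [Set.image_image, ← Ggrp_mul_Ggrp, Matrix.mul_inv_rev]
    simp only [Matrix.mul_assoc]

end AffineBlock

section ShiftMatrices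

variable {k : ℕ} {ε : ℝ}

lemma S2_mulVec_apply (w : Fin (2 * k + 2) → ℝ) (i : Fin (2 * k + 2)) :
    (S2 k *ᵥ w) i = if h : i.val + 1 ≤ 2 * k then w ⟨i.val + 1, by omega⟩ else 0 := by
  rw [mulVec, dotProduct]
  split_ifs with h
  · rw [Finset.sum_eq_single ⟨i.val + 1, by omega⟩] <;> simp +contextual [S2, h, Fin.ext_iff]
  · exact Finset.sum_eq_zero fun j _ => by simp [S2]; omega

lemma S2_pow_mulVec_apply (m : ℕ) (w : Fin (2 * k + 2) → ℝ) (i : Fin (2 * k + 2)) :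
    (S2 k ^ (m + 1) *ᵥ w) i
      = if h : i.val + (m + 1) ≤ 2 * k then w ⟨i.val + (m + 1), by omega⟩ else 0 := by
  induction m generalizing i with
  | zero => simpa using S2_mulVec_apply w i
  | succ m ih =>
    rw [pow_succ', ← mulVec_mulVec, S2_mulVec_apply]
    split_ifs with h₁ h₂ h₂
    · rw [ih, dif_pos (by simp; omega)]
      exact congrArg w (Fin.ext (by simp; omega))
    · rw [ih, dif_neg (by simp; omega)]
    · omega
    · rfl

lemma B2_mulVec_apply (w : Fin (2 * k + 2) → ℝ) (i : Fin (2 * k + 2)) :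
    (B2 k ε *ᵥ w) i
      = if i.val = 0 then w ⟨2 * k + 1, by omega⟩
        else if i.val = 2 * k + 1 then -ε * w ⟨2 * k, by omega⟩ else 0 := by
  simp only [mulVec, dotProduct, B2, of_apply]
  split_ifs with h₀ h₁
  · rw [Finset.sum_eq_single ⟨2 * k + 1, by omega⟩]
    · simp [h₀]
    · intro j _ hj
      have : j.val ≠ 2 * k + 1 := fun h => hj (Fin.ext h)
      simp [h₀, this]
    · simp
  · rw [Finset.sum_eq_single ⟨2 * k, by omega⟩]
    · simp [h₁]
    · intro j _ hj
      have : j.val ≠ 2 * k := fun h => hj (Fin.ext h)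
      simp [h₁, this]
    · simp
  · exact Finset.sum_eq_zero fun j _ => by simp [h₀, h₁]

lemma vecMul_S2_apply (w : Fin (2 * k + 2) → ℝ) (i : Fin (2 * k + 2)) :
    (w ᵥ* S2 k) i = if h : 1 ≤ i.val ∧ i.val ≤ 2 * k then w ⟨i.val - 1, by omega⟩ else 0 := by
  rw [vecMul, dotProduct]
  split_ifs with h
  · rw [Finset.sum_eq_single ⟨i.val - 1, by omega⟩]
    · simp [S2]; omega
    · intro j _ hj
      have : j.val ≠ i.val - 1 := fun h' => hj (Fin.ext h')
      simp [S2]; omega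
    · simp
  · exact Finset.sum_eq_zero fun j _ => by simp [S2]; omega

lemma X2_mulVec (a : Fin k → ℝ) (b : ℝ) (w : Fin (2 * k + 2) → ℝ) :
    X2 k ε a b *ᵥ w = ∑ j : Fin k, a j • (S2 k ^ (2 * j.val + 1) *ᵥ w) + b • (B2 k ε *ᵥ w) := by
  simp [X2, add_mulVec, sum_mulVec, smul_mulVec]

lemma X2_single_zero (hk : 0 < k) : X2 k ε (Pi.single ⟨0, hk⟩ 1) 0 = S2 k := by
  rw [X2, Finset.sum_eq_single ⟨0, hk⟩] <;> simp +contextual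

lemma X2_zero_one : X2 k ε 0 1 = B2 k ε := by
  simp [X2]

end ShiftMatrices

def mlmTranslation (k : ℕ) (hk : 0 < k) (lam mu : ℝ) (a : Fin k → ℝ) (b α : ℝ) :
    Fin (2 * k + 2) → ℝ :=
  fun i => if i.val = 0 then α else if i.val = 1 then lam * b
    else if i.val = 2 * k + 1 then lam * a ⟨0, hk⟩ + mu * b else 0

lemma Emat_mem_Mlm {k : ℕ} (hk : 0 < k) (ε lam mu : ℝ) (a : Fin k → ℝ) (b α : ℝ) :
    Emat (X2 k ε a b) (mlmTranslation k hk lam mu a b α) ∈ Mlm k hk ε lam mu :=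
  ⟨a, b, α, rfl⟩

lemma Mlm_eq_range {k : ℕ} (hk : 0 < k) (ε lam mu : ℝ) :
    Mlm k hk ε lam mu = Set.range fun p : (Fin k → ℝ) × ℝ × ℝ =>
      Emat (X2 k ε p.1 p.2.1) (mlmTranslation k hk lam mu p.1 p.2.1 p.2.2) :=
  Set.ext fun _ =>
    ⟨fun ⟨a, b, α, h⟩ => ⟨(a, b, α), h.symm⟩, fun ⟨⟨a, b, α⟩, h⟩ => ⟨a, b, α, h.symm⟩⟩

section NormalForm

variable {k : ℕ} {ε : ℝ} {a : Fin k → ℝ} {b : ℝ} {u v ξ : Fin (2 * k + 2) → ℝ}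

lemma apply_eq_zero_of_S2_mulVec_eq (huv : S2 k *ᵥ v = B2 k ε *ᵥ u) {s : ℕ} (h₂ : 2 ≤ s)
    (hs : s ≤ 2 * k) : v ⟨s, by omega⟩ = 0 := by
  have h := congrFun huv ⟨s - 1, by omega⟩
  rw [S2_mulVec_apply, dif_pos (by simp; omega), B2_mulVec_apply,
    if_neg (by simp; omega), if_neg (by simp; omega)] at h
  rw [← h]
  exact congrArg v (Fin.ext (by simp; omega))

lemma apply_last_eq_of_S2_mulVec_eq (hk : 0 < k) (huv : S2 k *ᵥ v = B2 k ε *ᵥ u) :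
    u ⟨2 * k + 1, by omega⟩ = v ⟨1, by omega⟩ := by
  have h := congrFun huv ⟨0, by omega⟩
  rw [S2_mulVec_apply, dif_pos (by simp; omega), B2_mulVec_apply, if_pos rfl] at h
  exact h.symm

lemma apply_two_mul_eq_zero_of_S2_mulVec_eq (hε : ε ≠ 0) (huv : S2 k *ᵥ v = B2 k ε *ᵥ u) :
    u ⟨2 * k, by omega⟩ = 0 := by
  have h := congrFun huv ⟨2 * k + 1, by omega⟩
  rw [S2_mulVec_apply, dif_neg (by simp), B2_mulVec_apply, if_neg (by simp), if_pos rfl] at h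
  simpa [hε] using h

lemma S2_pow_mulVec_vecMul_S2_apply (hu : u ⟨2 * k, by omega⟩ = 0) (m : ℕ)
    (i : Fin (2 * k + 2)) (h₁ : 1 ≤ i.val) (h₂ : i.val ≤ 2 * k) :
    (S2 k ^ (m + 1) *ᵥ (u ᵥ* S2 k)) i = (S2 k ^ (m + 1) *ᵥ u) ⟨i.val - 1, by omega⟩ := by
  rw [S2_pow_mulVec_apply, S2_pow_mulVec_apply]
  by_cases hlt : i.val + (m + 1) ≤ 2 * k
  · rw [dif_pos hlt, dif_pos (by simp; omega), vecMul_S2_apply, dif_pos (by simp; omega)]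
    exact congrArg u (Fin.ext (by simp; omega))
  · rw [dif_neg hlt]
    split_ifs with h
    · rw [← hu]
      exact congrArg u (Fin.ext (by simp at h ⊢; omega))
    · rfl

lemma sub_X2_mulVec_vecMul_S2_apply_of_le (hSξ : S2 k *ᵥ ξ = X2 k ε a b *ᵥ u)
    (hu : u ⟨2 * k, by omega⟩ = 0) (i : Fin (2 * k + 2)) (h₁ : 1 ≤ i.val) (h₂ : i.val ≤ 2 * k) :
    (ξ - X2 k ε a b *ᵥ (u ᵥ* S2 k)) i
      = if i.val = 1 then u ⟨2 * k + 1, by omega⟩ * b else 0 := by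
  have hξ : ξ i = (X2 k ε a b *ᵥ u) ⟨i.val - 1, by omega⟩ := by
    rw [← hSξ, S2_mulVec_apply, dif_pos (by simp; omega)]
    exact congrArg ξ (Fin.ext (by simp; omega))
  simp only [Pi.sub_apply, hξ, X2_mulVec, Pi.add_apply, Finset.sum_apply, Pi.smul_apply,
    smul_eq_mul, S2_pow_mulVec_vecMul_S2_apply hu _ i h₁ h₂, B2_mulVec_apply]
  split_ifs <;> first | omega | ring

lemma sub_X2_mulVec_vecMul_S2_apply_last (hk : 0 < k) (hBξ : B2 k ε *ᵥ ξ = X2 k ε a b *ᵥ v)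
    (huv : S2 k *ᵥ v = B2 k ε *ᵥ u) :
    (ξ - X2 k ε a b *ᵥ (u ᵥ* S2 k)) ⟨2 * k + 1, by omega⟩
      = v ⟨1, by omega⟩ * a ⟨0, hk⟩
        + (v ⟨2 * k + 1, by omega⟩ + ε * u ⟨2 * k - 1, by omega⟩) * b := by
  have hξ : ξ ⟨2 * k + 1, by omega⟩ = (X2 k ε a b *ᵥ v) ⟨0, by omega⟩ := by
    rw [← hBξ, B2_mulVec_apply, if_pos rfl]
  have hX2v : (X2 k ε a b *ᵥ v) ⟨0, by omega⟩
      = v ⟨1, by omega⟩ * a ⟨0, hk⟩ + v ⟨2 * k + 1, by omega⟩ * b := by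
    simp only [X2_mulVec, Pi.add_apply, Finset.sum_apply, Pi.smul_apply, smul_eq_mul,
      B2_mulVec_apply, if_pos]
    rw [Finset.sum_eq_single ⟨0, hk⟩]
    · rw [S2_pow_mulVec_apply, dif_pos (by simp; omega)]
      simp [mul_comm]
    · intro j _ hj
      have : j.val ≠ 0 := fun h => hj (Fin.ext h)
      rw [S2_pow_mulVec_apply, dif_pos (by dsimp only; omega),
        apply_eq_zero_of_S2_mulVec_eq huv (by omega) (by dsimp only; omega), mul_zero]
    · simp
  have hX2c : (X2 k ε a b *ᵥ (u ᵥ* S2 k)) ⟨2 * k + 1, by omega⟩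
      = -(ε * u ⟨2 * k - 1, by omega⟩) * b := by
    have hS : ∀ j : Fin k, (S2 k ^ (2 * j.val + 1) *ᵥ (u ᵥ* S2 k)) ⟨2 * k + 1, by omega⟩ = 0 :=
      fun j => by rw [S2_pow_mulVec_apply, dif_neg (by dsimp only; omega)]
    simp only [X2_mulVec, Pi.add_apply, Finset.sum_apply, Pi.smul_apply, smul_eq_mul, hS,
      mul_zero, Finset.sum_const_zero, zero_add, B2_mulVec_apply, vecMul_S2_apply]
    rw [if_neg (by omega), if_pos trivial, dif_pos (by omega)]
    ring
  rw [Pi.sub_apply, hξ, hX2v, hX2c]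
  ring

lemma sub_X2_mulVec_vecMul_S2_eq (hk : 0 < k) (hε : ε ≠ 0) (hSξ : S2 k *ᵥ ξ = X2 k ε a b *ᵥ u)
    (hBξ : B2 k ε *ᵥ ξ = X2 k ε a b *ᵥ v) (huv : S2 k *ᵥ v = B2 k ε *ᵥ u) :
    ξ - X2 k ε a b *ᵥ (u ᵥ* S2 k)
      = mlmTranslation k hk (v ⟨1, by omega⟩)
          (v ⟨2 * k + 1, by omega⟩ + ε * u ⟨2 * k - 1, by omega⟩) a b
          ((ξ - X2 k ε a b *ᵥ (u ᵥ* S2 k)) ⟨0, by omega⟩) := by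
  funext i
  simp only [mlmTranslation]
  split_ifs with h₀ h₁ h₂
  · exact congrArg _ (Fin.ext h₀)
  · rw [sub_X2_mulVec_vecMul_S2_apply_of_le hSξ (apply_two_mul_eq_zero_of_S2_mulVec_eq hε huv)
      i (by omega) (by omega), if_pos h₁, apply_last_eq_of_S2_mulVec_eq hk huv]
  · rw [show i = ⟨2 * k + 1, by omega⟩ from Fin.ext h₂,
      sub_X2_mulVec_vecMul_S2_apply_last hk hBξ huv]
  · rw [sub_X2_mulVec_vecMul_S2_apply_of_le hSξ (apply_two_mul_eq_zero_of_S2_mulVec_eq hε huv)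
      i (by omega) (by omega), if_neg h₁]

end NormalForm

theorem conjTo_Mlm_of_mem {k : ℕ} (hk : 0 < k) {ε : ℝ} (hε : ε ≠ 0)
    {M : Set (Matrix (Fin (2 * k + 2 + 1)) (Fin (2 * k + 2 + 1)) ℝ)}
    (hcomm : ∀ X ∈ M, ∀ Y ∈ M, X * Y = Y * X) (hadd : ∀ X ∈ M, ∀ Y ∈ M, X + Y ∈ M)
    (hform : ∀ m ∈ M, ∃ (a : Fin k → ℝ) (b : ℝ) (ξ : Fin (2 * k + 2) → ℝ),
      m = Emat (X2 k ε a b) ξ)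
    (hlift : ∀ (a : Fin k → ℝ) (b : ℝ), ∃ ξ, Emat (X2 k ε a b) ξ ∈ M)
    (he₀ : ∀ c : ℝ, Emat 0 (fun i : Fin (2 * k + 2) => if i.val = 0 then c else 0) ∈ M)
    {u v : Fin (2 * k + 2) → ℝ} (hu : Emat (S2 k) u ∈ M) (hv : Emat (B2 k ε) v ∈ M) :
    ConjTo (K2 k ε) M
      (Mlm k hk ε (v ⟨1, by omega⟩) (v ⟨2 * k + 1, by omega⟩ + ε * u ⟨2 * k - 1, by omega⟩)) := by
  set c := u ᵥ* S2 k
  have hnf : ∀ a b ξ, Emat (X2 k ε a b) ξ ∈ M →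
      ξ - X2 k ε a b *ᵥ c = mlmTranslation k hk (v ⟨1, by omega⟩)
        (v ⟨2 * k + 1, by omega⟩ + ε * u ⟨2 * k - 1, by omega⟩) a b
        ((ξ - X2 k ε a b *ᵥ c) ⟨0, by omega⟩) := fun a b ξ hξ =>
    sub_X2_mulVec_vecMul_S2_eq hk hε (mulVec_eq_of_Emat_commute (hcomm _ hu _ hξ))
      (mulVec_eq_of_Emat_commute (hcomm _ hv _ hξ)) (mulVec_eq_of_Emat_commute (hcomm _ hu _ hv))
  refine ⟨1, -c, by simp, Set.Subset.antisymm ?_ ?_⟩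
  · intro m hm
    obtain ⟨a, b, ξ, rfl⟩ := hform m hm
    refine ⟨_, hnf a b ξ hm ▸ Emat_mem_Mlm hk ε _ _ a b _, ?_⟩
    dsimp only
    rw [Ggrp_one_conj_Emat, sub_add_cancel]
  · rintro _ ⟨_, ⟨a, b, α, rfl⟩, rfl⟩
    obtain ⟨ξ, hξ⟩ := hlift a b
    convert hadd _ hξ _ (he₀ (α - (ξ - X2 k ε a b *ᵥ c) ⟨0, by omega⟩)) using 1
    dsimp only
    rw [Ggrp_one_conj_Emat, Emat_add, add_zero]
    congr 1
    funext i
    have := congrFun (hnf a b ξ hξ) i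
    simp only [mlmTranslation, Pi.sub_apply, Pi.add_apply] at this ⊢
    split_ifs at this ⊢ <;> linarith

noncomputable def scaleDiag (k : ℕ) (r : ℝ) : Fin (2 * k + 2) → ℝ :=
  fun i => if i.val = 2 * k + 1 then 1 else r ^ ((k : ℤ) - i.val)

section Scaling

variable {k : ℕ} {r : ℝ}

lemma scaleDiag_of_le {i : Fin (2 * k + 2)} (hi : i.val ≤ 2 * k) :
    scaleDiag k r i = r ^ ((k : ℤ) - i.val) :=
  if_neg (by omega)

lemma scaleDiag_last {i : Fin (2 * k + 2)} (hi : i.val = 2 * k + 1) : scaleDiag k r i = 1 :=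
  if_pos hi

lemma scaleDiag_ne_zero (hr : r ≠ 0) (i : Fin (2 * k + 2)) : scaleDiag k r i ≠ 0 := by
  unfold scaleDiag
  split_ifs
  exacts [one_ne_zero, zpow_ne_zero _ hr]

lemma diagonal_scaleDiag_mul_diagonal_inv (hr : r ≠ 0) :
    diagonal (scaleDiag k r) * diagonal (scaleDiag k r)⁻¹ = 1 := by
  rw [diagonal_mul_diagonal, ← diagonal_one]
  exact congrArg diagonal (funext fun i => mul_inv_cancel₀ (scaleDiag_ne_zero hr i))

lemma diagonal_scaleDiag_mul_K2 (hr : r ≠ 0) (ε : ℝ) :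
    diagonal (scaleDiag k r) * K2 k ε * (diagonal (scaleDiag k r))ᵀ = K2 k ε := by
  ext i j
  rw [diagonal_transpose, mul_diagonal, diagonal_mul, K2, of_apply]
  by_cases hF : i.val < 2 * k + 1 ∧ j.val < 2 * k + 1
  · rw [if_pos hF]
    by_cases hij : i.val + j.val = 2 * k
    · rw [if_pos hij, scaleDiag_of_le (by omega), scaleDiag_of_le (by omega),
        mul_comm, ← mul_assoc, ← zpow_add₀ hr, show (k : ℤ) - j.val + (k - i.val) = 0 by omega,
        zpow_zero, one_mul]
    · rw [if_neg hij, mul_zero, zero_mul]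
  · rw [if_neg hF]
    by_cases hl : i.val = 2 * k + 1 ∧ j.val = 2 * k + 1
    · rw [if_pos hl, scaleDiag_last hl.1, scaleDiag_last hl.2, mul_one, mul_one]
    · rw [if_neg hl, mul_zero, zero_mul]

lemma diagonal_scaleDiag_mul_S2 (hr : r ≠ 0) :
    diagonal (scaleDiag k r) * S2 k = (r • S2 k) * diagonal (scaleDiag k r) := by
  ext i j
  rw [mul_diagonal, diagonal_mul, Matrix.smul_apply, S2, of_apply, smul_eq_mul]
  by_cases hij : j.val = i.val + 1 ∧ j.val ≤ 2 * k
  · rw [if_pos hij, scaleDiag_of_le (by omega), scaleDiag_of_le hij.2, mul_one, mul_one,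
      ← zpow_one_add₀ hr]
    congr 1
    omega
  · rw [if_neg hij, mul_zero, mul_zero, zero_mul]

lemma diagonal_scaleDiag_mul_B2 (hr : r ≠ 0) (ε : ℝ) :
    diagonal (scaleDiag k r) * B2 k ε = (r ^ k • B2 k ε) * diagonal (scaleDiag k r) := by
  ext i j
  rw [mul_diagonal, diagonal_mul, Matrix.smul_apply, B2, of_apply, smul_eq_mul]
  by_cases h₁ : i.val = 0 ∧ j.val = 2 * k + 1
  · rw [if_pos h₁, scaleDiag_of_le (by omega), scaleDiag_last h₁.2, h₁.1]
    simp
  by_cases h₂ : i.val = 2 * k + 1 ∧ j.val = 2 * k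
  · rw [if_neg h₁, if_pos h₂, scaleDiag_last h₂.1, scaleDiag_of_le (by omega), h₂.2,
      mul_right_comm, ← zpow_natCast, ← zpow_add₀ hr,
      show (k : ℤ) + (k - (2 * k : ℕ)) = 0 by omega, zpow_zero]
  · rw [if_neg h₁, if_neg h₂, mul_zero, mul_zero, zero_mul]

lemma diagonal_scaleDiag_mul_X2 (hr : r ≠ 0) (ε : ℝ) (a : Fin k → ℝ) (b : ℝ) :
    diagonal (scaleDiag k r) * X2 k ε a b
      = X2 k ε (fun j => r ^ (2 * j.val + 1) * a j) (r ^ k * b) * diagonal (scaleDiag k r) := by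
  have hS : SemiconjBy (diagonal (scaleDiag k r)) (S2 k) (r • S2 k) :=
    diagonal_scaleDiag_mul_S2 hr
  simp only [X2, mul_add, add_mul, Finset.mul_sum, Finset.sum_mul, mul_smul_comm, smul_mul_assoc,
    (hS.pow_right _).eq, smul_pow, diagonal_scaleDiag_mul_B2 hr, smul_smul, mul_comm]

lemma diagonal_scaleDiag_mulVec_mlmTranslation (hk : 0 < k) (hr : r ≠ 0) (lam mu : ℝ)
    (a : Fin k → ℝ) (b α : ℝ) :
    diagonal (scaleDiag k r) *ᵥ mlmTranslation k hk (lam * r) (mu * r ^ k) a b α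
      = mlmTranslation k hk lam mu (fun j => r ^ (2 * j.val + 1) * a j) (r ^ k * b)
          (scaleDiag k r ⟨0, by omega⟩ * α) := by
  funext i
  rw [mulVec_diagonal]
  simp only [mlmTranslation]
  split_ifs with h₀ h₁ h₂
  · exact congrArg (· * α) (congrArg _ (Fin.ext h₀))
  · have hg : r ^ ((k : ℤ) - 1) * r = r ^ k := by
      rw [← zpow_add_one₀ hr, sub_add_cancel, zpow_natCast]
    rw [scaleDiag_of_le (by omega), h₁, Nat.cast_one]
    linear_combination lam * b * hg
  · rw [scaleDiag_last h₂]
    ring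
  · rw [mul_zero]

theorem conjTo_Mlm_scale (hk : 0 < k) (ε lam mu : ℝ) (hr : r ≠ 0) :
    ConjTo (K2 k ε) (Mlm k hk ε lam mu) (Mlm k hk ε (lam * r) (mu * r ^ k)) := by
  have hg₀ : scaleDiag k r ⟨0, by omega⟩ ≠ 0 := scaleDiag_ne_zero hr _
  set σ : (Fin k → ℝ) × ℝ × ℝ → (Fin k → ℝ) × ℝ × ℝ := fun p =>
    (fun j => r ^ (2 * j.val + 1) * p.1 j, r ^ k * p.2.1, scaleDiag k r ⟨0, by omega⟩ * p.2.2)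
  have hσ : Function.Surjective σ := by
    rintro ⟨a, b, α⟩
    refine ⟨(fun j => a j / r ^ (2 * j.val + 1), b / r ^ k, α / scaleDiag k r ⟨0, by omega⟩),
      ?_⟩
    simp only [σ, Prod.mk.injEq]
    refine ⟨funext fun j => ?_, ?_, ?_⟩ <;> field_simp
  refine ⟨diagonal (scaleDiag k r), 0, diagonal_scaleDiag_mul_K2 hr ε, ?_⟩
  rw [Mlm_eq_range, Mlm_eq_range, ← Set.range_comp, ← hσ.range_comp]
  congr 1
  funext p
  simp only [Function.comp, Ggrp_conj_Emat (diagonal_scaleDiag_mul_diagonal_inv hr),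
    diagonal_scaleDiag_mul_X2 hr, Matrix.mul_assoc, diagonal_scaleDiag_mul_diagonal_inv hr,
    Matrix.mul_one, mulVec_zero, sub_zero, diagonal_scaleDiag_mulVec_mlmTranslation hk hr, σ]

end Scaling

lemma exists_scale_normalForm {k : ℕ} (hk : k ≠ 0) (lam mu : ℝ) :
    ∃ r : ℝ, r ≠ 0 ∧
      ((lam * r = 0 ∧ (mu * r ^ k = 0 ∨ mu * r ^ k = 1 ∨ mu * r ^ k = -1)) ∨ lam * r = 1) := by
  by_cases hl : lam = 0
  · subst hl
    by_cases hm : mu = 0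
    · exact ⟨1, one_ne_zero, Or.inl ⟨zero_mul _, Or.inl (by simp [hm])⟩⟩
    have hpos : 0 < |mu|⁻¹ := by positivity
    refine ⟨|mu|⁻¹ ^ (k : ℝ)⁻¹, (Real.rpow_pos_of_pos hpos _).ne',
      Or.inl ⟨zero_mul _, Or.inr ?_⟩⟩
    rw [Real.rpow_inv_natCast_pow hpos.le hk]
    rcases lt_or_gt_of_ne hm with h | h
    · right
      rw [abs_of_neg h]
      field_simp
    · left
      rw [abs_of_pos h]
      field_simp
  · exact ⟨lam⁻¹, inv_ne_zero hl, Or.inr (mul_inv_cancel₀ hl)⟩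

/-- Every MASA `M` of `e(K)` whose `o(K)`-projection is `{X(a,b)}` and whose
translation part is `ℝ·E(0,e₁)` is `E(K)`-conjugate to some `M_{λ,μ}` with
`(λ,μ) ∈ {(0,0), (0,1), (0,-1)} ∪ {(1,μ) : μ ∈ ℝ}`. -/
theorem stmt2 (k : ℕ) (hk : 0 < k) (ε : ℝ) (hε : ε = 1 ∨ ε = -1)
    (M : Set (Matrix (Fin (2 * k + 2 + 1)) (Fin (2 * k + 2 + 1)) ℝ))
    (hM : IsMASA (eK (K2 k ε)) M)
    (hproj : {X | ∃ ξ : Fin (2 * k + 2) → ℝ, Emat X ξ ∈ M} =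
      {X | ∃ (a : Fin k → ℝ) (b : ℝ), X = X2 k ε a b})
    (htrans : M ∩ {m | ∃ a : Fin (2 * k + 2) → ℝ,
        m = Emat (0 : Matrix (Fin (2 * k + 2)) (Fin (2 * k + 2)) ℝ) a} =
      {m | ∃ c : ℝ,
        m = Emat (0 : Matrix (Fin (2 * k + 2)) (Fin (2 * k + 2)) ℝ)
          (fun i => if i.val = 0 then c else 0)}) :
    ∃ lam mu : ℝ,
      ((lam = 0 ∧ (mu = 0 ∨ mu = 1 ∨ mu = -1)) ∨ lam = 1) ∧
      ConjTo (K2 k ε) M (Mlm k hk ε lam mu) := by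
  obtain ⟨hsub, hcomm, -, hadd, -, -⟩ := hM
  have hε₀ : ε ≠ 0 := by rcases hε with rfl | rfl <;> norm_num
  have hform : ∀ m ∈ M, ∃ a b ξ, m = Emat (X2 k ε a b) ξ := by
    intro m hm
    obtain ⟨X, -, ξ, rfl⟩ := hsub hm
    obtain ⟨a, b, rfl⟩ := hproj.le ⟨ξ, hm⟩
    exact ⟨a, b, ξ, rfl⟩
  have hlift : ∀ a b, ∃ ξ, Emat (X2 k ε a b) ξ ∈ M := fun a b => hproj.ge ⟨a, b, rfl⟩
  obtain ⟨u, hu⟩ := hlift (Pi.single ⟨0, hk⟩ 1) 0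
  obtain ⟨v, hv⟩ := hlift 0 1
  rw [X2_single_zero] at hu
  rw [X2_zero_one] at hv
  have he₀ : ∀ c : ℝ, Emat 0 (fun i : Fin (2 * k + 2) => if i.val = 0 then c else 0) ∈ M :=
    fun c => (htrans.ge ⟨c, rfl⟩).1
  obtain ⟨r, hr, hnormal⟩ := exists_scale_normalForm hk.ne' (v ⟨1, by omega⟩)
    (v ⟨2 * k + 1, by omega⟩ + ε * u ⟨2 * k - 1, by omega⟩)
  exact ⟨_, _, hnormal, (conjTo_Mlm_of_mem hk hε₀ hcomm hadd hform hlift he₀ hu hv).trans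
    (conjTo_Mlm_scale hk ε _ _ hr)⟩
end

section
/- Let K ∈ ℝ^{4×4} be the matrix with block form [[0, I₂],[I₂, 0]]. For y, z₁, z₂ ∈ ℝ let X_e(y,z₁,z₂) be the 5×5 matrix y(E_{1,4} − E_{2,3} + E_{3,5}) + z₁E_{1,5} + z₂E_{2,5}. Then M = {X_e(y,z₁,z₂) : y, z₁, z₂ ∈ ℝ} is a maximal abelian subalgebra of the Lie algebra e(K). -/
open Matrix

/-!
Write elements of `e(K)` as `E(X, a)`. Block multiplication gives
`E(X, a) E(Y, b) = E(XY, Xb)`, so `E(X, a)` and `E(Y, b)` commute iff `XY = YX` and `Xb = Ya`.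
Here `M = {E(yN, (z₁, z₂, y, 0))}` with `N = E₁₄ - E₂₃ ∈ o(K)`, which makes `M` abelian.
If `E(X, a) ∈ e(K)` commutes with `M`, testing against the generators `z₁ = 1`, `z₂ = 1`,
`y = 1` gives `Xe₁ = Xe₂ = 0` and `Xe₃ = Na`. Since `K` is the permutation matrix of
`i ↦ i + 2 (mod 4)`, membership in `o(K)` reads `X_{i, j+2} + X_{j, i+2} = 0`, and these
equations force `X = a₃ N` and `a₄ = 0`.
-/

section Emat

variable {n : ℕ} (X Y : Matrix (Fin n) (Fin n) ℝ) (a b : Fin n → ℝ)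

@[simp]
lemma Emat_castSucc_castSucc (i j : Fin n) : Emat X a i.castSucc j.castSucc = X i j := by
  simp [Emat]

@[simp]
lemma Emat_castSucc_last (i : Fin n) : Emat X a i.castSucc (Fin.last n) = a i := by
  simp [Emat]

@[simp]
lemma Emat_last (j : Fin (n + 1)) : Emat X a (Fin.last n) j = 0 := by
  simp [Emat]

lemma Emat_mul_s5 : Emat X a * Emat Y b = Emat (X * Y) (X *ᵥ b) := by
  ext i j
  induction i using Fin.lastCases <;> induction j using Fin.lastCases <;>
    simp [mul_apply, Fin.sum_univ_castSucc, mulVec, dotProduct]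

variable {X Y a b} in
lemma Emat_inj : Emat X a = Emat Y b ↔ X = Y ∧ a = b := by
  refine ⟨fun h => ⟨?_, ?_⟩, fun ⟨hX, ha⟩ => hX ▸ ha ▸ rfl⟩
  · ext i j
    simpa using congr_fun₂ h i.castSucc j.castSucc
  · ext i
    simpa using congr_fun₂ h i.castSucc (Fin.last n)

variable {X Y a b} in
lemma Emat_mul_comm_iff :
    Emat X a * Emat Y b = Emat Y b * Emat X a ↔ X * Y = Y * X ∧ X *ᵥ b = Y *ᵥ a := by
  rw [Emat_mul_s5, Emat_mul_s5, Emat_inj]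

@[simp]
lemma Emat_zero : Emat (0 : Matrix (Fin n) (Fin n) ℝ) 0 = 0 := by
  ext i j
  induction i using Fin.lastCases <;> induction j using Fin.lastCases <;> simp

lemma Emat_add_s5 : Emat (X + Y) (a + b) = Emat X a + Emat Y b := by
  ext i j
  induction i using Fin.lastCases <;> induction j using Fin.lastCases <;> simp

lemma Emat_smul (c : ℝ) : Emat (c • X) (c • a) = c • Emat X a := by
  ext i j
  induction i using Fin.lastCases <;> induction j using Fin.lastCases <;> simp

end Emat

lemma smul_mem_oK {n : ℕ} {K X : Matrix (Fin n) (Fin n) ℝ} (c : ℝ) (hX : X ∈ oK K) :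
    c • X ∈ oK K := by
  show (c • X) * K + K * (c • X)ᵀ = 0
  rw [transpose_smul, smul_mul_assoc, mul_smul_comm, ← smul_add, show X * K + K * Xᵀ = 0 from hX,
    smul_zero]

def splitForm : Matrix (Fin 4) (Fin 4) ℝ := !![0, 0, 1, 0; 0, 0, 0, 1; 1, 0, 0, 0; 0, 1, 0, 0]

lemma mul_splitForm_apply (X : Matrix (Fin 4) (Fin 4) ℝ) (i j : Fin 4) :
    (X * splitForm) i j = X i (j + 2) := by
  fin_cases j <;> simp [splitForm, mul_apply, Fin.sum_univ_four]

lemma splitForm_mul_apply (X : Matrix (Fin 4) (Fin 4) ℝ) (i j : Fin 4) :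
    (splitForm * X) i j = X (i + 2) j := by
  fin_cases i <;> simp [splitForm, mul_apply, Fin.sum_univ_four]

lemma mem_oK_splitForm_iff {X : Matrix (Fin 4) (Fin 4) ℝ} :
    X ∈ oK splitForm ↔ ∀ i j, X i (j + 2) + X j (i + 2) = 0 := by
  show X * splitForm + splitForm * Xᵀ = 0 ↔ _
  simp only [← Matrix.ext_iff, Matrix.add_apply, mul_splitForm_apply, splitForm_mul_apply,
    transpose_apply, Matrix.zero_apply]

def skewN : Matrix (Fin 4) (Fin 4) ℝ := !![0, 0, 0, 1; 0, 0, -1, 0; 0, 0, 0, 0; 0, 0, 0, 0]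

lemma skewN_mem_oK : skewN ∈ oK splitForm := by
  rw [mem_oK_splitForm_iff]
  intro i j
  fin_cases i <;> fin_cases j <;> simp [skewN]

lemma skewN_mulVec (a : Fin 4 → ℝ) : skewN *ᵥ a = ![a 3, -a 2, 0, 0] := by
  ext i
  fin_cases i <;> simp [skewN, mulVec, dotProduct, Fin.sum_univ_four]

lemma eq_smul_skewN_of_mem_oK {X : Matrix (Fin 4) (Fin 4) ℝ} {a : Fin 4 → ℝ}
    (hX : X ∈ oK splitForm) (h₀ : X *ᵥ ![1, 0, 0, 0] = 0) (h₁ : X *ᵥ ![0, 1, 0, 0] = 0)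
    (h₂ : X *ᵥ ![0, 0, 1, 0] = skewN *ᵥ a) : X = a 2 • skewN ∧ a 3 = 0 := by
  rw [skewN_mulVec] at h₂
  have col₀ : X 0 0 = 0 ∧ X 1 0 = 0 ∧ X 2 0 = 0 ∧ X 3 0 = 0 := by
    simpa [Fin.forall_fin_succ, mulVec, dotProduct, Fin.sum_univ_four] using congrFun h₀
  have col₁ : X 0 1 = 0 ∧ X 1 1 = 0 ∧ X 2 1 = 0 ∧ X 3 1 = 0 := by
    simpa [Fin.forall_fin_succ, mulVec, dotProduct, Fin.sum_univ_four] using congrFun h₁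
  have col₂ : X 0 2 = a 3 ∧ X 1 2 = -a 2 ∧ X 2 2 = 0 ∧ X 3 2 = 0 := by
    simpa [Fin.forall_fin_succ, mulVec, dotProduct, Fin.sum_univ_four] using congrFun h₂
  have o := mem_oK_splitForm_iff.1 hX
  have e₀ : X 0 2 + X 0 2 = 0 := o 0 0
  have e₁ : X 0 3 + X 1 2 = 0 := o 0 1
  have e₂ : X 1 3 + X 1 3 = 0 := o 1 1
  have e₃ : X 2 3 + X 1 0 = 0 := o 2 1
  have e₄ : X 3 3 + X 1 1 = 0 := o 3 1
  have ha : a 3 = 0 := by linarith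
  refine ⟨?_, ha⟩
  ext i j
  fin_cases i <;> fin_cases j <;> simp [skewN] <;> linarith

lemma Emat_smul_skewN (y z₁ z₂ : ℝ) :
    Emat (y • skewN) ![z₁, z₂, y, 0] =
      !![0, 0, 0, y, z₁; 0, 0, -y, 0, z₂; 0, 0, 0, 0, y; 0, 0, 0, 0, 0; 0, 0, 0, 0, 0] := by
  ext i j
  fin_cases i <;> fin_cases j <;> simp [Emat, skewN]

lemma smul_skewN_mulVec_comm (y y' z₁ z₂ z₁' z₂' : ℝ) :
    (y • skewN) *ᵥ ![z₁', z₂', y', 0] = (y' • skewN) *ᵥ ![z₁, z₂, y, 0] := by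
  simp only [smul_mulVec, skewN_mulVec]
  ext i
  fin_cases i <;> simp [mul_comm]

/-- `M = {X_e(y,z₁,z₂)}` with `X_e(y,z₁,z₂) = y(E₁₄ - E₂₃ + E₃₅) + z₁E₁₅ + z₂E₂₅`
is a maximal abelian subalgebra of `e(K)`, `K = [[0, I₂],[I₂, 0]]`. -/
theorem stmt5 :
    IsMASA (eK (!![0, 0, 1, 0; 0, 0, 0, 1; 1, 0, 0, 0; 0, 1, 0, 0] :
        Matrix (Fin 4) (Fin 4) ℝ))
      {m | ∃ y z₁ z₂ : ℝ,
        m = !![0, 0, 0, y, z₁;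
               0, 0, -y, 0, z₂;
               0, 0, 0, 0, y;
               0, 0, 0, 0, 0;
               0, 0, 0, 0, 0]} := by
  simp_rw [← Emat_smul_skewN]
  refine ⟨?_, ?_, ⟨0, 0, 0, by simp [← Matrix.zero_empty]⟩, ?_, ?_, ?_⟩
  · rintro _ ⟨y, z₁, z₂, rfl⟩
    exact ⟨_, smul_mem_oK y skewN_mem_oK, _, rfl⟩
  · rintro _ ⟨y, z₁, z₂, rfl⟩ _ ⟨y', z₁', z₂', rfl⟩
    rw [Emat_mul_comm_iff, smul_mul_smul_comm, smul_mul_smul_comm, mul_comm y]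
    exact ⟨rfl, smul_skewN_mulVec_comm ..⟩
  · rintro _ ⟨y, z₁, z₂, rfl⟩ _ ⟨y', z₁', z₂', rfl⟩
    refine ⟨y + y', z₁ + z₁', z₂ + z₂', ?_⟩
    simp [← Emat_add_s5, add_smul]
  · rintro c _ ⟨y, z₁, z₂, rfl⟩
    refine ⟨c * y, c * z₁, c * z₂, ?_⟩
    simp [← Emat_smul, smul_smul]
  · rintro _ ⟨X, hX, a, rfl⟩ hcomm
    have h₀ := Emat_mul_comm_iff.1 (hcomm _ ⟨0, 1, 0, rfl⟩)
    have h₁ := Emat_mul_comm_iff.1 (hcomm _ ⟨0, 0, 1, rfl⟩)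
    have h₂ := Emat_mul_comm_iff.1 (hcomm _ ⟨1, 0, 0, rfl⟩)
    simp only [zero_smul, zero_mulVec, one_smul] at h₀ h₁ h₂
    obtain ⟨rfl, ha⟩ := eq_smul_skewN_of_mem_oK hX h₀.2 h₁.2 h₂.2
    refine ⟨a 2, a 0, a 1, ?_⟩
    congr
    ext i
    fin_cases i <;> simp [ha]
end
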